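/- Let g = g₀ ⊕ g₁ be a non-degenerate filiform Lie superalgebra over ℂ with dim g₀ = 3 and dim g₁ = m ≥ 5. If g is naturally graded, then g is isomorphic to the Lie superalgebra with basis {X₀,X₁,X₂,Y₁,…,Y_m} and law [X₀,X₁] = X₂, [X₀,Y_i] = Y_{i+1} for 1 ≤ i ≤ m−1, (Y₁,Y₁) = X₂. -/

import Mathlib

/-- The sign `(-1)^(i·j)` for parities `i j : ZMod 2`, as a complex scalar. -/
def ssign (i j : ZMod 2) : ℂ := if i = 1 ∧ j = 1 then -1 else 1

/-- A (complex) Lie superalgebra structure on the vector space `V`: a ℤ₂-grading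
`g` whose parts are complementary, together with an even bilinear bracket which is
super skew-symmetric and satisfies the super Jacobi identity on homogeneous elements. -/
structure LieSuperAlg (V : Type*) [AddCommGroup V] [Module ℂ V] where
  g : ZMod 2 → Submodule ℂ V
  bk : V →ₗ[ℂ] V →ₗ[ℂ] V
  compl : IsCompl (g 0) (g 1)
  grading : ∀ i j : ZMod 2, ∀ x ∈ g i, ∀ y ∈ g j, bk x y ∈ g (i + j)
  skew : ∀ i j : ZMod 2, ∀ x ∈ g i, ∀ y ∈ g j, bk x y = -(ssign i j • bk y x)
  jacobi : ∀ i j k : ZMod 2, ∀ x ∈ g i, ∀ y ∈ g j, ∀ z ∈ g k,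
    ssign k i • bk x (bk y z) + ssign i j • bk y (bk z x) + ssign j k • bk z (bk x y) = 0

namespace LieSuperAlg

variable {V : Type*} [AddCommGroup V] [Module ℂ V]

/-- The descending sequences `C⁰(g_i) = g_i`, `C^{k+1}(g_i) = [g₀, C^k(g_i)]`. -/
def C (A : LieSuperAlg V) (i : ZMod 2) : ℕ → Submodule ℂ V
  | 0 => A.g i
  | k + 1 => Submodule.span ℂ {z | ∃ x ∈ A.g 0, ∃ y ∈ C A i k, z = A.bk x y}

/-- The descending central sequence of the whole superalgebra. -/
def DC (A : LieSuperAlg V) : ℕ → Submodule ℂ V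
  | 0 => ⊤
  | k + 1 => Submodule.span ℂ {z | ∃ x ∈ DC A k, ∃ y : V, z = A.bk x y}

/-- Nilpotency: the descending central sequence reaches zero. -/
def IsNilpotent (A : LieSuperAlg V) : Prop := ∃ k, A.DC k = ⊥

/-- `A` is filiform with parameters `(n, m)`: it is nilpotent, `dim g₀ = n + 1`,
`dim g₁ = m`, and the super-nilindex is `(n, m)` (the maximal one). -/
def IsFiliform (A : LieSuperAlg V) (n m : ℕ) : Prop :=
  A.IsNilpotent ∧ Module.finrank ℂ (A.g 0) = n + 1 ∧ Module.finrank ℂ (A.g 1) = m ∧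
    A.C 0 (n - 1) ≠ ⊥ ∧ A.C 1 (m - 1) ≠ ⊥ ∧ A.C 0 n = ⊥ ∧ A.C 1 m = ⊥

/-- Non-degeneracy: the bracket does not vanish identically on `g₁ × g₁`. -/
def NonDegenerate (A : LieSuperAlg V) : Prop :=
  ∃ x ∈ A.g 1, ∃ y ∈ A.g 1, A.bk x y ≠ 0

/-- `A` is naturally graded: there are subspaces `W a i` (`i ≥ 1`, parity `a`), splitting
the filtrations `C` (so that `W a i ≅ C^{i-1}(g_a)/C^i(g_a)` and `g ≅ gr(g)` in the
natural way) and compatible with the bracket (so `gr(g)` is a graded Lie superalgebra,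
`[gⁱ, gʲ] ⊆ g^{i+j}`).  For finite-dimensional nilpotent superalgebras this is
equivalent to the textbook definition `g ≅ gr(g)` with `gr(g)` graded. -/
def NaturallyGraded (A : LieSuperAlg V) : Prop :=
  ∃ W : ZMod 2 → ℕ → Submodule ℂ V,
    (∀ a, W a 0 = ⊥) ∧
    (∀ a k, A.C a k = W a (k + 1) ⊔ A.C a (k + 1)) ∧
    (∀ a k, W a (k + 1) ⊓ A.C a (k + 1) = ⊥) ∧
    (∀ a b : ZMod 2, ∀ i j : ℕ, ∀ x ∈ W a i, ∀ y ∈ W b j, A.bk x y ∈ W (a + b) (i + j))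

/-- `X 0, …, X n` and `Y 1, …, Y m` form an adapted basis of the superalgebra:
the `X i` are even, the `Y j` are odd, and together they form a basis of `V`. -/
def IsAdaptedBasis (A : LieSuperAlg V) (n m : ℕ) (X Y : ℕ → V) : Prop :=
  (∀ i, i ≤ n → X i ∈ A.g 0) ∧ (∀ j, 1 ≤ j → j ≤ m → Y j ∈ A.g 1) ∧
  LinearIndependent ℂ
    (Sum.elim (fun i : Fin (n + 1) => X i.val) (fun j : Fin m => Y (j.val + 1))) ∧
  Submodule.span ℂ
    (Set.range (Sum.elim (fun i : Fin (n + 1) => X i.val) (fun j : Fin m => Y (j.val + 1)))) = ⊤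

end LieSuperAlg

/-- The law `L^{2,m} + φ₁₂`: `[X₀,X₁] = X₂`, `[X₀,Y_j] = Y_{j+1}` for
`1 ≤ j ≤ m-1`, `(Y₁,Y₁) = X₂`, all other products of basis elements being zero
(the `[Y,X]` products are determined by super skew-symmetry). -/
def LawL2m {V : Type*} [AddCommGroup V] [Module ℂ V] (A : LieSuperAlg V) (m : ℕ) : Prop :=
  ∃ X Y : ℕ → V, A.IsAdaptedBasis 2 m X Y ∧
    (∀ i j : ℕ, i ≤ 2 → j ≤ 2 → A.bk (X i) (X j) =
      if i = 0 ∧ j = 1 then X 2 else if i = 1 ∧ j = 0 then -X 2 else 0) ∧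
    (∀ i j : ℕ, i ≤ 2 → 1 ≤ j → j ≤ m → A.bk (X i) (Y j) =
      if i = 0 ∧ j + 1 ≤ m then Y (j + 1) else 0) ∧
    (∀ i j : ℕ, 1 ≤ i → i ≤ m → 1 ≤ j → j ≤ m → A.bk (Y i) (Y j) =
      if i = 1 ∧ j = 1 then X 2 else 0)

/-!
The natural grading splits `g₀ = W₀¹ ⊕ W₀²` and `g₁ = ⊕ₖ W₁ᵏ` with `[W_aⁱ, W_bʲ] ⊆ W_{a+b}^{i+j}`.
Since `C¹(g₀) = W₀² ≠ 0` and `[g₀, g₀] = [W₀¹, W₀¹]`, we get `dim W₀¹ = 2` and `dim W₀² = 1`;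
since `C^k(g₁)` drops strictly for `k < m`, every `W₁ᵏ` is at most a line. Odd brackets land in
`W₀^{i+j}`, which vanishes for `i + j ≥ 3`, so only `(W₁¹, W₁¹)` survives: non-degeneracy makes
`X₂ := (Y₁, Y₁)` span `W₀²`, and the Jacobi identity for `Y₁, Y₁, y` shows that `X₂` commutes
with `g₁`. A nonzero `z ∈ W₀¹` with `[z, Y₁] = 0` (it exists as `dim W₀¹ > dim W₁²`) then kills
every `W₁ᵏ` by Jacobi, because `[W₀¹, W₁ᵏ] = W₁ᵏ⁺¹` for `k < m`. For any `X₀` completing `z` to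
a basis of `W₀¹`, the chain `Y_{k+1} = [X₀, Y_k]` spans `g₁`, and rescaling `z` to `X₁` gives
`[X₀, X₁] = X₂`.
-/

namespace Submodule

variable {K V V' : Type*} [Field K] [AddCommGroup V] [Module K V] [AddCommGroup V'] [Module K V']
  [FiniteDimensional K V]

theorem le_span_singleton_of_finrank_le_one {p : Submodule K V} (hp : Module.finrank K p ≤ 1)
    {x : V} (hx : x ∈ p) (hx0 : x ≠ 0) : p ≤ K ∙ x :=
  (eq_span_singleton_of_mem_of_finrank_eq_one
    (hp.antisymm (one_le_finrank_iff.mpr (p.ne_bot_iff.mpr ⟨x, hx, hx0⟩))) hx hx0).le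

theorem exists_mem_le_span_singleton_of_finrank_le_one {p : Submodule K V}
    (hp : Module.finrank K p ≤ 1) : ∃ x ∈ p, p ≤ K ∙ x := by
  rcases eq_or_ne p ⊥ with rfl | hp0
  · exact ⟨0, zero_mem _, bot_le⟩
  · obtain ⟨x, hx, hx0⟩ := p.ne_bot_iff.mp hp0
    exact ⟨x, hx, le_span_singleton_of_finrank_le_one hp hx hx0⟩

theorem exists_le_span_pair_of_finrank_eq_two {p : Submodule K V} (hp : Module.finrank K p = 2)
    {z : V} (hz : z ∈ p) (hz0 : z ≠ 0) : ∃ x ∈ p, p ≤ span K {x, z} := by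
  obtain ⟨x, hx, hxz⟩ : ∃ x ∈ p, x ∉ K ∙ z := SetLike.not_le_iff_exists.mp fun h => by
    have := finrank_mono h
    rw [finrank_span_singleton hz0] at this
    omega
  have hlt : K ∙ z < span K {x, z} := SetLike.lt_iff_le_and_exists.mpr
    ⟨span_mono (by simp), x, subset_span (by simp), hxz⟩
  have hrank := finrank_lt_finrank_of_lt hlt
  rw [finrank_span_singleton hz0] at hrank
  refine ⟨x, hx, (eq_of_le_of_finrank_le ?_ (by omega)).ge⟩
  rw [span_le, Set.insert_subset_iff, Set.singleton_subset_iff]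
  exact ⟨hx, hz⟩

theorem exists_mem_ne_zero_apply_eq_zero [FiniteDimensional K V'] {p : Submodule K V}
    {q : Submodule K V'} (f : V →ₗ[K] V') (hf : ∀ x ∈ p, f x ∈ q)
    (h : Module.finrank K q < Module.finrank K p) : ∃ x ∈ p, x ≠ 0 ∧ f x = 0 := by
  obtain ⟨x, hx, hx0⟩ := Submodule.ne_bot_iff _ |>.mp <|
    LinearMap.ker_ne_bot_of_finrank_lt (f := (f.domRestrict p).codRestrict q fun x => hf x x.2) h
  refine ⟨x, x.2, by simpa using hx0, ?_⟩
  exact congrArg Subtype.val (LinearMap.mem_ker.mp hx)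

end Submodule

theorem Nat.eq_sub_of_succ_lt {f : ℕ → ℕ} {m : ℕ} (h0 : f 0 ≤ m)
    (hf : ∀ k < m, f (k + 1) < f k) {k : ℕ} (hk : k ≤ m) : f k = m - k := by
  have upper : ∀ k ≤ m, f k + k ≤ m := by
    intro k hk
    induction k with
    | zero => simpa using h0
    | succ k ih => have := hf k (by omega); have := ih (by omega); omega
  have lower : ∀ t ≤ m, t ≤ f (m - t) := by
    intro t ht
    induction t with
    | zero => omega
    | succ t ih =>
      have := hf (m - (t + 1)) (by omega)
      rw [show m - (t + 1) + 1 = m - t by omega] at this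
      have := ih (by omega)
      omega
  have := upper k hk
  have := lower (m - k) (by omega)
  rw [Nat.sub_sub_self hk] at this
  omega

def tripleSeq {V : Type*} (x₀ x₁ x₂ : V) : ℕ → V
  | 0 => x₀
  | 1 => x₁
  | _ => x₂

@[simp] theorem ssign_zero_left (j : ZMod 2) : ssign 0 j = 1 := if_neg (by simp)

@[simp] theorem ssign_zero_right (i : ZMod 2) : ssign i 0 = 1 := if_neg (by simp)

@[simp] theorem ssign_one_one : ssign 1 1 = -1 := if_pos ⟨rfl, rfl⟩

namespace LieSuperAlg

open Submodule

variable {V : Type*} [AddCommGroup V] [Module ℂ V] (A : LieSuperAlg V) {x y z : V}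

theorem bk_swap_of_even (hx : x ∈ A.g 0) (hy : y ∈ A.g 0) : A.bk y x = -A.bk x y := by
  simpa using A.skew 0 0 y hy x hx

theorem bk_self_of_even (hx : x ∈ A.g 0) : A.bk x x = 0 := by
  have h2 : (2 : ℂ) • A.bk x x = 0 := by
    linear_combination (norm := module) A.bk_swap_of_even hx hx
  exact (smul_eq_zero.mp h2).resolve_left two_ne_zero

theorem bk_swap_of_odd_even (hx : x ∈ A.g 0) (hy : y ∈ A.g 1) : A.bk y x = -A.bk x y := by
  simpa using A.skew 1 0 y hy x hx

theorem bk_swap_of_odd (hx : x ∈ A.g 1) (hy : y ∈ A.g 1) : A.bk y x = A.bk x y := by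
  simpa using A.skew 1 1 y hy x hx

theorem jacobi_even_even_odd (hx : x ∈ A.g 0) (hy : y ∈ A.g 0) (hz : z ∈ A.g 1) :
    A.bk x (A.bk y z) + A.bk y (A.bk z x) + A.bk z (A.bk x y) = 0 := by
  simpa using A.jacobi 0 0 1 x hx y hy z hz

theorem bk_bk_self_of_odd (hx : x ∈ A.g 1) (hy : y ∈ A.g 1) :
    A.bk y (A.bk x x) = -(2 : ℂ) • A.bk x (A.bk x y) := by
  have h := A.jacobi 1 1 1 x hx x hx y hy
  rw [A.bk_swap_of_odd hx hy] at h
  simp only [ssign_one_one, neg_smul, one_smul] at h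
  linear_combination (norm := module) -h

theorem bk_self_bk_self_of_odd (hx : x ∈ A.g 1) : A.bk x (A.bk x x) = 0 := by
  have h := A.bk_bk_self_of_odd hx hx
  have h3 : (3 : ℂ) • A.bk x (A.bk x x) = 0 := by linear_combination (norm := module) h
  exact (smul_eq_zero.mp h3).resolve_left (by norm_num)

theorem C_succ (a : ZMod 2) (k : ℕ) :
    A.C a (k + 1) = span ℂ {z | ∃ x ∈ A.g 0, ∃ y ∈ A.C a k, z = A.bk x y} := rfl

theorem bk_mem_C_succ {a : ZMod 2} {k : ℕ} (hx : x ∈ A.g 0) (hy : y ∈ A.C a k) :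
    A.bk x y ∈ A.C a (k + 1) :=
  subset_span ⟨x, hx, y, hy, rfl⟩

theorem C_succ_le_iff {a : ZMod 2} {k : ℕ} {p : Submodule ℂ V} :
    A.C a (k + 1) ≤ p ↔ ∀ x ∈ A.g 0, ∀ y ∈ A.C a k, A.bk x y ∈ p := by
  refine ⟨fun h x hx y hy => h (A.bk_mem_C_succ hx hy), fun h => span_le.mpr ?_⟩
  rintro _ ⟨x, hx, y, hy, rfl⟩
  exact h x hx y hy

theorem C_succ_le (a : ZMod 2) (k : ℕ) : A.C a (k + 1) ≤ A.C a k := by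
  induction k with
  | zero =>
    refine A.C_succ_le_iff.mpr fun x hx y hy => ?_
    have h := A.grading 0 a x hx y hy
    rwa [zero_add] at h
  | succ k ih => exact A.C_succ_le_iff.mpr fun x hx y hy => A.bk_mem_C_succ hx (ih hy)

theorem C_antitone (a : ZMod 2) : Antitone (A.C a) :=
  antitone_nat_of_succ_le (A.C_succ_le a)

theorem C_le_g (a : ZMod 2) (k : ℕ) : A.C a k ≤ A.g a :=
  A.C_antitone a (Nat.zero_le k)

theorem C_add_eq_of_C_succ_eq {a : ZMod 2} {k : ℕ} (h : A.C a (k + 1) = A.C a k) (t : ℕ) :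
    A.C a (k + t) = A.C a k := by
  induction t with
  | zero => rfl
  | succ t ih => rw [← add_assoc, C_succ, ih, ← C_succ, h]

theorem not_C_le_C_succ {a : ZMod 2} {m k : ℕ} (hbot : A.C a m = ⊥) (hne : A.C a (m - 1) ≠ ⊥)
    (hk : k < m) : ¬ A.C a k ≤ A.C a (k + 1) := fun h => by
  have hstall := A.C_add_eq_of_C_succ_eq ((A.C_succ_le a k).antisymm h) (m - k)
  rw [Nat.add_sub_cancel' hk.le, hbot] at hstall
  exact hne (le_bot_iff.mp (hstall ▸ A.C_antitone a (Nat.le_sub_one_of_lt hk)))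

def adaptedFamily (n m : ℕ) (X Y : ℕ → V) : Fin (n + 1) ⊕ Fin m → V :=
  Sum.elim (fun i : Fin (n + 1) => X i.val) (fun j : Fin m => Y (j.val + 1))

theorem X_mem_span_adaptedFamily {n m i : ℕ} {X Y : ℕ → V} (hi : i ≤ n) :
    X i ∈ span ℂ (Set.range (adaptedFamily n m X Y)) :=
  subset_span ⟨Sum.inl ⟨i, by omega⟩, rfl⟩

theorem Y_mem_span_adaptedFamily {n m j : ℕ} {X Y : ℕ → V} (h1 : 1 ≤ j) (hj : j ≤ m) :
    Y j ∈ span ℂ (Set.range (adaptedFamily n m X Y)) :=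
  subset_span ⟨Sum.inr ⟨j - 1, by omega⟩, by simp [adaptedFamily, Nat.sub_add_cancel h1]⟩

theorem isAdaptedBasis_of_le_span [FiniteDimensional ℂ V] {n m : ℕ} {X Y : ℕ → V}
    (h0 : Module.finrank ℂ (A.g 0) = n + 1) (h1 : Module.finrank ℂ (A.g 1) = m)
    (hX : ∀ i, i ≤ n → X i ∈ A.g 0) (hY : ∀ j, 1 ≤ j → j ≤ m → Y j ∈ A.g 1)
    (hspan : A.g 0 ⊔ A.g 1 ≤ span ℂ (Set.range (adaptedFamily n m X Y))) :
    A.IsAdaptedBasis n m X Y := by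
  have htop : span ℂ (Set.range (adaptedFamily n m X Y)) = ⊤ :=
    eq_top_iff.mpr (A.compl.sup_eq_top ▸ hspan)
  refine ⟨hX, hY, linearIndependent_of_top_le_span_of_card_eq_finrank htop.ge ?_, htop⟩
  rw [Fintype.card_sum, Fintype.card_fin, Fintype.card_fin,
    ← finrank_add_eq_of_isCompl A.compl, h0, h1]

def adIter (x y : V) (k : ℕ) : V := (A.bk x)^[k - 1] y

theorem adIter_succ {k : ℕ} (hk : 1 ≤ k) : A.adIter x y (k + 1) = A.bk x (A.adIter x y k) := by
  obtain ⟨k, rfl⟩ := Nat.exists_eq_add_of_le' hk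
  simp [adIter, Function.iterate_succ_apply']

structure IsNaturalGrading (W : ZMod 2 → ℕ → Submodule ℂ V) : Prop where
  W_zero : ∀ a, W a 0 = ⊥
  C_eq_sup : ∀ a k, A.C a k = W a (k + 1) ⊔ A.C a (k + 1)
  W_inf_C : ∀ a k, W a (k + 1) ⊓ A.C a (k + 1) = ⊥
  bk_mem : ∀ a b : ZMod 2, ∀ i j : ℕ, ∀ x ∈ W a i, ∀ y ∈ W b j, A.bk x y ∈ W (a + b) (i + j)

variable {A}

theorem NaturallyGraded.exists_isNaturalGrading (h : A.NaturallyGraded) :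
    ∃ W, A.IsNaturalGrading W :=
  let ⟨W, h₀, h₁, h₂, h₃⟩ := h
  ⟨W, h₀, h₁, h₂, h₃⟩

section IsFiliform

variable {n m : ℕ} (h : A.IsFiliform n m)
include h

theorem IsFiliform.finrank_even : Module.finrank ℂ (A.g 0) = n + 1 := h.2.1
theorem IsFiliform.finrank_odd : Module.finrank ℂ (A.g 1) = m := h.2.2.1
theorem IsFiliform.C_even_pred_ne_bot : A.C 0 (n - 1) ≠ ⊥ := h.2.2.2.1
theorem IsFiliform.C_odd_pred_ne_bot : A.C 1 (m - 1) ≠ ⊥ := h.2.2.2.2.1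
theorem IsFiliform.C_even_eq_bot : A.C 0 n = ⊥ := h.2.2.2.2.2.1
theorem IsFiliform.C_odd_eq_bot : A.C 1 m = ⊥ := h.2.2.2.2.2.2

theorem IsFiliform.finrank_C_odd [FiniteDimensional ℂ V] {k : ℕ} (hk : k ≤ m) :
    Module.finrank ℂ (A.C 1 k) = m - k :=
  Nat.eq_sub_of_succ_lt (f := fun k => Module.finrank ℂ (A.C 1 k)) h.finrank_odd.le
    (fun k hk => finrank_lt_finrank_of_lt (lt_of_le_not_ge (A.C_succ_le 1 k)
      (A.not_C_le_C_succ h.C_odd_eq_bot h.C_odd_pred_ne_bot hk))) hk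

end IsFiliform

namespace IsNaturalGrading

variable {W : ZMod 2 → ℕ → Submodule ℂ V} (hW : A.IsNaturalGrading W) {a b c : ZMod 2}
  {i j k m : ℕ} {X₀ Y₁ : V} {ω : ℂ}
include hW

theorem W_succ_le_C (a : ZMod 2) (k : ℕ) : W a (k + 1) ≤ A.C a k :=
  le_sup_left.trans (hW.C_eq_sup a k).ge

theorem W_le_g (a : ZMod 2) (k : ℕ) : W a k ≤ A.g a := by
  cases k with
  | zero => simp [hW.W_zero]
  | succ k => exact (hW.W_succ_le_C a k).trans (A.C_le_g a k)

theorem W_eq_bot_of_C_eq_bot (h : A.C a k = ⊥) (hl : k < j) : W a j = ⊥ := by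
  obtain ⟨j, rfl⟩ : ∃ j', j = j' + 1 := ⟨j - 1, by omega⟩
  exact le_bot_iff.mp ((hW.W_succ_le_C a j).trans (h ▸ A.C_antitone a (by omega)))

theorem bk_mem_W (hx : x ∈ W a i) (hy : y ∈ W b j) (hab : a + b = c := by decide)
    (hij : i + j = k := by omega) : A.bk x y ∈ W c k :=
  hab ▸ hij ▸ hW.bk_mem a b i j x hx y hy

theorem bk_eq_zero_of_W_eq_bot (hx : x ∈ W a i) (hy : y ∈ W b j) (hc : W c k = ⊥)
    (hab : a + b = c := by decide) (hij : i + j = k := by omega) : A.bk x y = 0 := by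
  simpa [hc] using hW.bk_mem_W hx hy hab hij

theorem finrank_C [FiniteDimensional ℂ V] (a : ZMod 2) (k : ℕ) :
    Module.finrank ℂ (A.C a k) =
      Module.finrank ℂ (W a (k + 1)) + Module.finrank ℂ (A.C a (k + 1)) := by
  have h := finrank_sup_add_finrank_inf_eq (W a (k + 1)) (A.C a (k + 1))
  rwa [hW.W_inf_C, finrank_bot, add_zero, ← hW.C_eq_sup] at h

theorem C_le_of_W_le {N : ℕ} {p : Submodule ℂ V} (hN : A.C a N = ⊥)
    (h : ∀ k, j < k → W a k ≤ p) : A.C a j ≤ p := by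
  suffices ∀ t j, N ≤ j + t → (∀ k, j < k → W a k ≤ p) → A.C a j ≤ p from
    this N j (by omega) h
  intro t
  induction t with
  | zero => exact fun j hj _ => (A.C_antitone a hj).trans (hN ▸ bot_le)
  | succ t ih =>
    intro j hj h
    rw [hW.C_eq_sup a j]
    exact sup_le (h _ j.lt_succ_self) (ih (j + 1) (by omega) fun k hk => h k (by omega))

theorem C_succ_le_of_bk_W_eq_zero (h : ∀ x ∈ A.g 0, ∀ y ∈ W a (k + 1), A.bk x y = 0) :
    A.C a (k + 1) ≤ A.C a (k + 2) := by
  refine A.C_succ_le_iff.mpr fun x hx y hy => ?_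
  rw [hW.C_eq_sup a k] at hy
  obtain ⟨y₁, hy₁, y₂, hy₂, rfl⟩ := mem_sup.mp hy
  rw [map_add, h x hx y₁ hy₁, zero_add]
  exact A.bk_mem_C_succ hx hy₂

theorem adIter_mem_W (hX₀ : X₀ ∈ W 0 1) (hY₁ : Y₁ ∈ W 1 1) (hk : 1 ≤ k) :
    A.adIter X₀ Y₁ k ∈ W 1 k := by
  induction k, hk using Nat.le_induction with
  | base => exact hY₁
  | succ k hk ih => rw [A.adIter_succ hk]; exact hW.bk_mem_W hX₀ ih

variable (hfil : A.IsFiliform 2 m)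
include hfil

theorem W_even_eq_bot (hk : 3 ≤ k) : W 0 k = ⊥ :=
  hW.W_eq_bot_of_C_eq_bot hfil.C_even_eq_bot hk

theorem C_even_one_eq : A.C 0 1 = W 0 2 := by
  rw [hW.C_eq_sup 0 1, hfil.C_even_eq_bot, sup_bot_eq]

theorem g_even_eq : A.g 0 = W 0 1 ⊔ W 0 2 := by
  rw [← hW.C_even_one_eq hfil]
  exact hW.C_eq_sup 0 0

theorem bk_W_even_two_eq_zero (hx : x ∈ A.g 0) (hy : y ∈ W 0 2) : A.bk x y = 0 := by
  rw [hW.g_even_eq hfil] at hx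
  obtain ⟨x₁, hx₁, x₂, hx₂, rfl⟩ := mem_sup.mp hx
  rw [map_add, LinearMap.add_apply,
    hW.bk_eq_zero_of_W_eq_bot hx₁ hy (hW.W_even_eq_bot hfil le_rfl),
    hW.bk_eq_zero_of_W_eq_bot hx₂ hy (hW.W_even_eq_bot hfil (k := 4) (by norm_num)), add_zero]

theorem exists_bk_W_even_one_ne_zero : ∃ x ∈ W 0 1, ∃ y ∈ W 0 1, A.bk x y ≠ 0 := by
  by_contra! h
  refine hfil.C_even_pred_ne_bot (eq_bot_iff.mpr (A.C_succ_le_iff.mpr fun x hx y hy => ?_))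
  rw [hW.g_even_eq hfil] at hx
  rw [show A.C 0 0 = A.g 0 from rfl, hW.g_even_eq hfil] at hy
  obtain ⟨x₁, hx₁, x₂, hx₂, rfl⟩ := mem_sup.mp hx
  obtain ⟨y₁, hy₁, y₂, hy₂, rfl⟩ := mem_sup.mp hy
  have hx₂y₁ : A.bk x₂ y₁ = 0 := by
    rw [A.bk_swap_of_even (hW.W_le_g 0 1 hy₁) (hW.W_le_g 0 2 hx₂),
      hW.bk_W_even_two_eq_zero hfil (hW.W_le_g 0 1 hy₁) hx₂, neg_zero]
  rw [mem_bot, map_add, hW.bk_W_even_two_eq_zero hfil (add_mem (hW.W_le_g 0 1 hx₁)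
    (hW.W_le_g 0 2 hx₂)) hy₂, map_add, LinearMap.add_apply, h x₁ hx₁ y₁ hy₁, hx₂y₁, add_zero,
    add_zero]

theorem bk_W_odd_eq_zero (hx : x ∈ W 1 i) (hy : y ∈ W 1 j) (hij : 3 ≤ i + j) : A.bk x y = 0 :=
  hW.bk_eq_zero_of_W_eq_bot hx hy (hW.W_even_eq_bot hfil hij)

theorem bk_C_odd_one_eq_zero (hx : x ∈ A.g 1) (hy : y ∈ A.C 1 1) : A.bk x y = 0 := by
  have hvanish : ∀ j, 1 < j → ∀ y ∈ W 1 j, ∀ x ∈ A.g 1, A.bk x y = 0 := by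
    intro j hj y hy
    have : A.C 1 0 ≤ LinearMap.ker (A.bk.flip y) :=
      hW.C_le_of_W_le hfil.C_odd_eq_bot fun k hk x hx => hW.bk_W_odd_eq_zero hfil hx hy (by omega)
    exact fun x hx => this hx
  have : A.C 1 1 ≤ LinearMap.ker (A.bk x) :=
    hW.C_le_of_W_le hfil.C_odd_eq_bot fun j hj y hy => hvanish j hj y hy x hx
  exact this hy

theorem bk_odd_mem_span_bk_self (hY₁ : W 1 1 ≤ ℂ ∙ Y₁) (hx : x ∈ A.g 1)
    (hy : y ∈ A.g 1) : A.bk x y ∈ ℂ ∙ A.bk Y₁ Y₁ := by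
  rw [show A.g 1 = A.C 1 0 from rfl, hW.C_eq_sup 1 0] at hx hy
  obtain ⟨x₁, hx₁, x₂, hx₂, rfl⟩ := mem_sup.mp hx
  obtain ⟨y₁, hy₁, y₂, hy₂, rfl⟩ := mem_sup.mp hy
  have hx₂y₁ : A.bk x₂ y₁ = 0 := by
    rw [A.bk_swap_of_odd (hW.W_le_g 1 1 hy₁) (A.C_le_g 1 1 hx₂)]
    exact hW.bk_C_odd_one_eq_zero hfil (hW.W_le_g 1 1 hy₁) hx₂
  obtain ⟨a, rfl⟩ := mem_span_singleton.mp (hY₁ hx₁)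
  obtain ⟨b, rfl⟩ := mem_span_singleton.mp (hY₁ hy₁)
  rw [map_add, hW.bk_C_odd_one_eq_zero hfil (add_mem (hW.W_le_g 1 1 hx₁) (A.C_le_g 1 1 hx₂)) hy₂,
    add_zero, map_add, LinearMap.add_apply, hx₂y₁, add_zero, map_smul, map_smul,
    LinearMap.smul_apply, smul_smul]
  exact smul_mem _ _ (mem_span_singleton_self _)

variable [FiniteDimensional ℂ V]

theorem finrank_W_even_one_add_two :
    Module.finrank ℂ (W 0 1) + Module.finrank ℂ (W 0 2) = 3 := by
  have h := hW.finrank_C 0 0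
  rwa [hW.C_even_one_eq hfil, show A.C 0 0 = A.g 0 from rfl, hfil.finrank_even, eq_comm] at h

theorem two_le_finrank_W_even_one : 2 ≤ Module.finrank ℂ (W 0 1) := by
  by_contra! hlt
  obtain ⟨x, hx, y, hy, hxy⟩ := hW.exists_bk_W_even_one_ne_zero hfil
  have hx0 : x ≠ 0 := by rintro rfl; simp at hxy
  obtain ⟨c, rfl⟩ := mem_span_singleton.mp
    (le_span_singleton_of_finrank_le_one (by omega) hx hx0 hy)
  exact hxy (by rw [map_smul, A.bk_self_of_even (hW.W_le_g 0 1 hx), smul_zero])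

theorem finrank_W_even_two : Module.finrank ℂ (W 0 2) = 1 := by
  have h1 : 1 ≤ Module.finrank ℂ (W 0 2) :=
    one_le_finrank_iff.mpr (hW.C_even_one_eq hfil ▸ hfil.C_even_pred_ne_bot)
  have := hW.finrank_W_even_one_add_two hfil
  have := hW.two_le_finrank_W_even_one hfil
  omega

theorem finrank_W_even_one : Module.finrank ℂ (W 0 1) = 2 := by
  have := hW.finrank_W_even_one_add_two hfil
  have := hW.finrank_W_even_two hfil
  omega

theorem finrank_W_odd_le_one (k : ℕ) : Module.finrank ℂ (W 1 k) ≤ 1 := by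
  rcases k with _ | k
  · rw [hW.W_zero, finrank_bot]
    exact zero_le_one
  by_cases hk : k < m
  · have := hW.finrank_C 1 k
    rw [hfil.finrank_C_odd hk.le, hfil.finrank_C_odd hk] at this
    omega
  · rw [hW.W_eq_bot_of_C_eq_bot hfil.C_odd_eq_bot (j := k + 1) (by omega), finrank_bot]
    exact zero_le_one

theorem W_odd_le_span_singleton (hy : y ∈ W 1 k) (hy0 : y ≠ 0) : W 1 k ≤ ℂ ∙ y :=
  le_span_singleton_of_finrank_le_one (hW.finrank_W_odd_le_one hfil k) hy hy0

theorem exists_W_odd_one_bk_self_ne_zero (hnd : A.NonDegenerate) :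
    ∃ Y₁ ∈ W 1 1, A.bk Y₁ Y₁ ≠ 0 := by
  obtain ⟨Y₁, hY₁, hspan⟩ :=
    exists_mem_le_span_singleton_of_finrank_le_one (hW.finrank_W_odd_le_one hfil 1)
  obtain ⟨x, hx, y, hy, hxy⟩ := hnd
  refine ⟨Y₁, hY₁, fun h => hxy ?_⟩
  simpa [h] using hW.bk_odd_mem_span_bk_self hfil hspan hx hy

theorem bk_odd_bk_self_eq_zero (hY₁ : Y₁ ∈ W 1 1) (hy : y ∈ A.g 1) :
    A.bk y (A.bk Y₁ Y₁) = 0 := by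
  rcases eq_or_ne Y₁ 0 with rfl | hY₁0
  · simp
  have hY₁g := hW.W_le_g 1 1 hY₁
  obtain ⟨c, hc⟩ := mem_span_singleton.mp (hW.bk_odd_mem_span_bk_self hfil
    (hW.W_odd_le_span_singleton hfil hY₁ hY₁0) hY₁g hy)
  rw [A.bk_bk_self_of_odd hY₁g hy, ← hc, map_smul, A.bk_self_bk_self_of_odd hY₁g, smul_zero,
    smul_zero]

theorem bk_W_even_two_odd_eq_zero (hnd : A.NonDegenerate) (hx : x ∈ W 0 2) (hy : y ∈ A.g 1) :
    A.bk x y = 0 := by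
  obtain ⟨Y₁, hY₁, hY₁₁⟩ := hW.exists_W_odd_one_bk_self_ne_zero hfil hnd
  obtain ⟨c, rfl⟩ := mem_span_singleton.mp (le_span_singleton_of_finrank_le_one
    (hW.finrank_W_even_two hfil).le (hW.bk_mem_W hY₁ hY₁) hY₁₁ hx)
  have hX₂y : A.bk (A.bk Y₁ Y₁) y = 0 := by
    rw [← neg_eq_zero, ← A.bk_swap_of_odd_even (hW.W_le_g 0 2 (hW.bk_mem_W hY₁ hY₁)) hy,
      hW.bk_odd_bk_self_eq_zero hfil hY₁ hy]
  rw [map_smul, LinearMap.smul_apply, hX₂y, smul_zero]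

theorem exists_bk_W_even_one_W_odd_ne_zero (hnd : A.NonDegenerate) (h1 : 1 ≤ k) (hk : k < m) :
    ∃ x ∈ W 0 1, ∃ y ∈ W 1 k, A.bk x y ≠ 0 := by
  by_contra! h
  obtain ⟨k, rfl⟩ : ∃ j, k = j + 1 := ⟨k - 1, by omega⟩
  refine A.not_C_le_C_succ hfil.C_odd_eq_bot hfil.C_odd_pred_ne_bot hk
    (hW.C_succ_le_of_bk_W_eq_zero fun x hx y hy => ?_)
  rw [hW.g_even_eq hfil] at hx
  obtain ⟨x₁, hx₁, x₂, hx₂, rfl⟩ := mem_sup.mp hx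
  rw [map_add, LinearMap.add_apply, h x₁ hx₁ y hy,
    hW.bk_W_even_two_odd_eq_zero hfil hnd hx₂ (hW.W_le_g 1 _ hy), add_zero]

theorem bk_W_odd_succ_eq_zero (hnd : A.NonDegenerate) (hz : z ∈ W 0 1) (hk : 1 ≤ k)
    (h : ∀ y ∈ W 1 k, A.bk z y = 0) : ∀ y ∈ W 1 (k + 1), A.bk z y = 0 := by
  intro y hy
  by_cases hkm : k < m
  -- `W 1 (k + 1)` is the line through `[x, y']`, and Jacobi kills `[z, [x, y']]`:
  -- `[z, y'] = 0` by assumption and `[z, x] ∈ W 0 2` commutes with `g₁`.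
  · obtain ⟨x, hx, y', hy', hxy'⟩ := hW.exists_bk_W_even_one_W_odd_ne_zero hfil hnd hk hkm
    have hzg := hW.W_le_g 0 1 hz
    have hy'g := hW.W_le_g 1 k hy'
    have hzx : A.bk z x ∈ W 0 2 := hW.bk_mem_W hz hx
    have hjac := A.jacobi_even_even_odd hzg (hW.W_le_g 0 1 hx) hy'g
    rw [A.bk_swap_of_odd_even hzg hy'g, h y' hy', neg_zero, map_zero, add_zero,
      A.bk_swap_of_odd_even (hW.W_le_g 0 2 hzx) hy'g,
      hW.bk_W_even_two_odd_eq_zero hfil hnd hzx hy'g, neg_zero, add_zero] at hjac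
    obtain ⟨c, rfl⟩ := mem_span_singleton.mp (hW.W_odd_le_span_singleton hfil
      (hW.bk_mem_W (c := 1) (k := k + 1) hx hy') hxy' hy)
    rw [map_smul, hjac, smul_zero]
  · rw [hW.W_eq_bot_of_C_eq_bot hfil.C_odd_eq_bot (by omega : m < k + 1), mem_bot] at hy
    rw [hy, map_zero]

theorem exists_W_even_one_ne_zero_bk_odd_eq_zero (hnd : A.NonDegenerate) :
    ∃ z ∈ W 0 1, z ≠ 0 ∧ ∀ y ∈ A.g 1, A.bk z y = 0 := by
  obtain ⟨Y₁, hY₁, hY₁₁⟩ := hW.exists_W_odd_one_bk_self_ne_zero hfil hnd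
  have hY₁0 : Y₁ ≠ 0 := by rintro rfl; simp at hY₁₁
  obtain ⟨z, hz, hz0, hzY₁⟩ := exists_mem_ne_zero_apply_eq_zero (A.bk.flip Y₁)
    (p := W 0 1) (q := W 1 2) (fun x hx => hW.bk_mem_W hx hY₁) (by
      rw [hW.finrank_W_even_one hfil]
      have := hW.finrank_W_odd_le_one hfil 2
      omega)
  have hz_one : ∀ y ∈ W 1 1, A.bk z y = 0 := fun y hy => by
    obtain ⟨c, rfl⟩ := mem_span_singleton.mp (hW.W_odd_le_span_singleton hfil hY₁ hY₁0 hy)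
    rw [map_smul, show A.bk z Y₁ = 0 from hzY₁, smul_zero]
  have hz_W : ∀ k, 1 ≤ k → ∀ y ∈ W 1 k, A.bk z y = 0 :=
    Nat.le_induction hz_one fun k hk ih => hW.bk_W_odd_succ_eq_zero hfil hnd hz hk ih
  have : A.C 1 0 ≤ LinearMap.ker (A.bk z) := hW.C_le_of_W_le hfil.C_odd_eq_bot hz_W
  exact ⟨z, hz, hz0, fun y hy => this hy⟩

theorem bk_ne_zero_of_le_span_pair (hnd : A.NonDegenerate) (hzc : ∀ y ∈ A.g 1, A.bk z y = 0)
    (hspan : W 0 1 ≤ span ℂ {X₀, z}) (h1 : 1 ≤ k) (hk : k < m) (hy : y ∈ W 1 k) (hy0 : y ≠ 0) :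
    A.bk X₀ y ≠ 0 := by
  obtain ⟨x, hx, y', hy', hxy'⟩ := hW.exists_bk_W_even_one_W_odd_ne_zero hfil hnd h1 hk
  obtain ⟨a, b, rfl⟩ := mem_span_pair.mp (hspan hx)
  obtain ⟨c, rfl⟩ := mem_span_singleton.mp (hW.W_odd_le_span_singleton hfil hy hy0 hy')
  intro h
  apply hxy'
  simp [h, hzc y (hW.W_le_g 1 k hy)]

theorem adIter_ne_zero (hnd : A.NonDegenerate) (hzc : ∀ y ∈ A.g 1, A.bk z y = 0)
    (hspan : W 0 1 ≤ span ℂ {X₀, z}) (hX₀ : X₀ ∈ W 0 1) (hY₁ : Y₁ ∈ W 1 1) (hY₁0 : Y₁ ≠ 0)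
    (h1 : 1 ≤ k) (hk : k ≤ m) : A.adIter X₀ Y₁ k ≠ 0 := by
  induction k, h1 using Nat.le_induction with
  | base => exact hY₁0
  | succ k h1 ih =>
    rw [A.adIter_succ h1]
    exact hW.bk_ne_zero_of_le_span_pair hfil hnd hzc hspan h1 (by omega)
      (hW.adIter_mem_W hX₀ hY₁ h1) (ih (by omega))

theorem exists_bk_eq_smul_bk_self (hX₀ : X₀ ∈ W 0 1) (hz : z ∈ W 0 1)
    (hspan : W 0 1 ≤ span ℂ {X₀, z}) (hY₁ : Y₁ ∈ W 1 1) (hY₁₁ : A.bk Y₁ Y₁ ≠ 0) :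
    ∃ ω : ℂ, ω ≠ 0 ∧ A.bk X₀ z = ω • A.bk Y₁ Y₁ := by
  obtain ⟨ω, hω⟩ := mem_span_singleton.mp (le_span_singleton_of_finrank_le_one
    (hW.finrank_W_even_two hfil).le (hW.bk_mem_W hY₁ hY₁) hY₁₁ (hW.bk_mem_W hX₀ hz))
  refine ⟨ω, fun hω0 => ?_, hω.symm⟩
  obtain ⟨x, hx, y, hy, hxy⟩ := hW.exists_bk_W_even_one_ne_zero hfil
  obtain ⟨a, b, rfl⟩ := mem_span_pair.mp (hspan hx)
  obtain ⟨c, d, rfl⟩ := mem_span_pair.mp (hspan hy)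
  have hX₀g := hW.W_le_g 0 1 hX₀
  have hzg := hW.W_le_g 0 1 hz
  rw [hω0, zero_smul] at hω
  apply hxy
  simp [A.bk_self_of_even hX₀g, A.bk_self_of_even hzg, A.bk_swap_of_even hX₀g hzg, ← hω]

omit [FiniteDimensional ℂ V] in
theorem bk_tripleSeq_tripleSeq (hX₀ : X₀ ∈ W 0 1) (hz : z ∈ W 0 1) (hY₁ : Y₁ ∈ W 1 1)
    (hω0 : ω ≠ 0) (hω : A.bk X₀ z = ω • A.bk Y₁ Y₁) (hi : i ≤ 2) (hj : j ≤ 2) :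
    A.bk (tripleSeq X₀ (ω⁻¹ • z) (A.bk Y₁ Y₁) i) (tripleSeq X₀ (ω⁻¹ • z) (A.bk Y₁ Y₁) j) =
      if i = 0 ∧ j = 1 then A.bk Y₁ Y₁ else if i = 1 ∧ j = 0 then -A.bk Y₁ Y₁ else 0 := by
  have hX₀g := hW.W_le_g 0 1 hX₀
  have hX₁g : ω⁻¹ • z ∈ A.g 0 := smul_mem _ _ (hW.W_le_g 0 1 hz)
  have hX₂ : A.bk Y₁ Y₁ ∈ W 0 2 := hW.bk_mem_W hY₁ hY₁
  have hX₂g := hW.W_le_g 0 2 hX₂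
  have e01 : A.bk X₀ (ω⁻¹ • z) = A.bk Y₁ Y₁ := by
    rw [map_smul, hω, smul_smul, inv_mul_cancel₀ hω0, one_smul]
  have e10 : A.bk (ω⁻¹ • z) X₀ = -A.bk Y₁ Y₁ := by rw [A.bk_swap_of_even hX₀g hX₁g, e01]
  have e02 := hW.bk_W_even_two_eq_zero hfil hX₀g hX₂
  have e12 := hW.bk_W_even_two_eq_zero hfil hX₁g hX₂
  have e20 : A.bk (A.bk Y₁ Y₁) X₀ = 0 := by rw [A.bk_swap_of_even hX₀g hX₂g, e02, neg_zero]
  have e21 : A.bk (A.bk Y₁ Y₁) (ω⁻¹ • z) = 0 := by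
    rw [A.bk_swap_of_even hX₁g hX₂g, e12, neg_zero]
  interval_cases i <;> interval_cases j <;>
    simp only [tripleSeq, A.bk_self_of_even hX₀g, A.bk_self_of_even hX₁g,
      A.bk_self_of_even hX₂g, e01, e10, e02, e12, e20, e21] <;> simp

omit [FiniteDimensional ℂ V] in
theorem bk_adIter_adIter (hX₀ : X₀ ∈ W 0 1) (hY₁ : Y₁ ∈ W 1 1) (hi : 1 ≤ i) (hj : 1 ≤ j) :
    A.bk (A.adIter X₀ Y₁ i) (A.adIter X₀ Y₁ j) = if i = 1 ∧ j = 1 then A.bk Y₁ Y₁ else 0 := by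
  split_ifs with h
  · obtain ⟨rfl, rfl⟩ := h
    rfl
  · exact hW.bk_W_odd_eq_zero hfil (hW.adIter_mem_W hX₀ hY₁ hi) (hW.adIter_mem_W hX₀ hY₁ hj)
      (by omega)

theorem bk_tripleSeq_adIter (hnd : A.NonDegenerate) (hX₀ : X₀ ∈ W 0 1) (hY₁ : Y₁ ∈ W 1 1)
    (hzc : ∀ y ∈ A.g 1, A.bk z y = 0) (hi : i ≤ 2) (h1 : 1 ≤ j) :
    A.bk (tripleSeq X₀ (ω⁻¹ • z) (A.bk Y₁ Y₁) i) (A.adIter X₀ Y₁ j) =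
      if i = 0 ∧ j + 1 ≤ m then A.adIter X₀ Y₁ (j + 1) else 0 := by
  have hY := hW.adIter_mem_W hX₀ hY₁ h1
  have hYg := hW.W_le_g 1 j hY
  interval_cases i
  · split_ifs with h
    · exact (A.adIter_succ h1).symm
    · have hW_top : W 1 (j + 1) = ⊥ :=
        hW.W_eq_bot_of_C_eq_bot hfil.C_odd_eq_bot (by omega : m < j + 1)
      exact (mem_bot ℂ).mp (hW_top ▸ hW.bk_mem_W hX₀ hY)
  · simp [tripleSeq, hzc _ hYg]
  · simp [tripleSeq, hW.bk_W_even_two_odd_eq_zero hfil hnd (hW.bk_mem_W hY₁ hY₁) hYg]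

theorem isAdaptedBasis_tripleSeq_adIter (hnd : A.NonDegenerate) (hX₀ : X₀ ∈ W 0 1)
    (hz : z ∈ W 0 1) (hzc : ∀ y ∈ A.g 1, A.bk z y = 0) (hspan : W 0 1 ≤ span ℂ {X₀, z})
    (hY₁ : Y₁ ∈ W 1 1) (hY₁₁ : A.bk Y₁ Y₁ ≠ 0) (hω0 : ω ≠ 0) :
    A.IsAdaptedBasis 2 m (tripleSeq X₀ (ω⁻¹ • z) (A.bk Y₁ Y₁)) (A.adIter X₀ Y₁) := by
  have hY₁0 : Y₁ ≠ 0 := by rintro rfl; simp at hY₁₁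
  have hX₂ : A.bk Y₁ Y₁ ∈ W 0 2 := hW.bk_mem_W hY₁ hY₁
  refine A.isAdaptedBasis_of_le_span hfil.finrank_even hfil.finrank_odd (fun i hi => ?_)
    (fun j h1 _ => hW.W_le_g 1 j (hW.adIter_mem_W hX₀ hY₁ h1)) ?_
  · interval_cases i
    exacts [hW.W_le_g 0 1 hX₀, smul_mem _ _ (hW.W_le_g 0 1 hz), hW.W_le_g 0 2 hX₂]
  set P := span ℂ (Set.range (adaptedFamily 2 m (tripleSeq X₀ (ω⁻¹ • z) (A.bk Y₁ Y₁))
    (A.adIter X₀ Y₁)))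
  have hzP : z ∈ P := by
    simpa [tripleSeq, smul_smul, hω0] using
      smul_mem P ω (X_mem_span_adaptedFamily (i := 1) (by omega))
  have hW01 : W 0 1 ≤ P := hspan.trans (span_le.mpr (Set.insert_subset_iff.mpr
    ⟨X_mem_span_adaptedFamily (i := 0) (by omega), Set.singleton_subset_iff.mpr hzP⟩))
  have hW02 : W 0 2 ≤ P :=
    (le_span_singleton_of_finrank_le_one (hW.finrank_W_even_two hfil).le hX₂ hY₁₁).trans
      (span_singleton_le_iff_mem _ _ |>.mpr (X_mem_span_adaptedFamily (i := 2) le_rfl))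
  have hg1 : A.C 1 0 ≤ P := hW.C_le_of_W_le hfil.C_odd_eq_bot fun k hk => by
    by_cases hkm : k ≤ m
    · refine (hW.W_odd_le_span_singleton hfil (hW.adIter_mem_W hX₀ hY₁ hk)
        (hW.adIter_ne_zero hfil hnd hzc hspan hX₀ hY₁ hY₁0 hk hkm)).trans ?_
      exact span_singleton_le_iff_mem _ _ |>.mpr (Y_mem_span_adaptedFamily hk hkm)
    · simp [hW.W_eq_bot_of_C_eq_bot hfil.C_odd_eq_bot (by omega : m < k)]
  rw [hW.g_even_eq hfil]
  exact sup_le (sup_le hW01 hW02) hg1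

end IsNaturalGrading

end LieSuperAlg

theorem stmt3_general {V : Type*} [AddCommGroup V] [Module ℂ V] [FiniteDimensional ℂ V] (A : LieSuperAlg V) (m : ℕ)
    (hfil : A.IsFiliform 2 m) (hnd : A.NonDegenerate) (hng : A.NaturallyGraded) :
    LawL2m A m := by
  obtain ⟨W, hW⟩ := hng.exists_isNaturalGrading
  obtain ⟨Y₁, hY₁, hY₁₁⟩ := hW.exists_W_odd_one_bk_self_ne_zero hfil hnd
  obtain ⟨z, hz, hz0, hzc⟩ := hW.exists_W_even_one_ne_zero_bk_odd_eq_zero hfil hnd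
  obtain ⟨X₀, hX₀, hspan⟩ :=
    Submodule.exists_le_span_pair_of_finrank_eq_two (hW.finrank_W_even_one hfil) hz hz0
  obtain ⟨ω, hω0, hω⟩ := hW.exists_bk_eq_smul_bk_self hfil hX₀ hz hspan hY₁ hY₁₁
  exact ⟨tripleSeq X₀ (ω⁻¹ • z) (A.bk Y₁ Y₁), A.adIter X₀ Y₁,
    hW.isAdaptedBasis_tripleSeq_adIter hfil hnd hX₀ hz hzc hspan hY₁ hY₁₁ hω0,
    fun i j hi hj => hW.bk_tripleSeq_tripleSeq hfil hX₀ hz hY₁ hω0 hω hi hj,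
    fun i j hi h1 _ => hW.bk_tripleSeq_adIter hfil hnd hX₀ hY₁ hzc hi h1,
    fun i j hi _ hj _ => hW.bk_adIter_adIter hfil hX₀ hY₁ hi hj⟩

/-- Every non-degenerate naturally graded filiform Lie superalgebra with
`dim g₀ = 3` and `dim g₁ = m` as indicated is isomorphic to `L^{2,m} + φ₁₂`. -/
theorem stmt3 {V : Type*} [AddCommGroup V] [Module ℂ V] [FiniteDimensional ℂ V] (A : LieSuperAlg V) (m : ℕ)
    (hm : 5 ≤ m)
    (hfil : A.IsFiliform 2 m) (hnd : A.NonDegenerate) (hng : A.NaturallyGraded) :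
    LawL2m A m :=
  stmt3_general A m hfil hnd hng
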